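/- Let M ≥ 1 be a natural number and define Φ(α) := e^{−α}∑_{x=1}^{M} α^x/(x−1)! for real α ≥ 0. Then for every α ≥ 0 there exists β with (M−1)/e ≤ β ≤ M such that Φ(β) ≥ Φ(α). In particular any maximiser of Φ over [0, ∞) lies in the interval [(M−1)/e, M], so a maximising α is of order Θ(M). -/

import Mathlib

/-- `Φ(α) = e^{-α} ∑_{x=1}^{M} α^x/(x-1)!`, the expected per-slot throughput of
frame slotted Aloha with multipacket reception capacity `M`. -/
noncomputable def Phi (M : ℕ) (α : ℝ) : ℝ :=
  Real.exp (-α) * ∑ x ∈ Finset.Icc 1 M, α ^ x / (Nat.factorial (x - 1) : ℝ)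

/-!
Write `Φ(x) = e^{-x} x E(x)` with `E(x) = ∑_{k<M} x^k/k!` the truncated exponential series.
Since `E' = E - x^{M-1}/(M-1)!`, one gets `Φ'(x) = e^{-x} (E(x) - x^M/(M-1)!)`.
For `0 < x ≤ (M-1)/e`, the bound `((M-1)/e)^{M-1} ≤ (M-1)!` (a single term of `e^{M-1}`)
gives `x^M/(M-1)! ≤ x < 1 + x ≤ E(x)`, so `Φ` increases strictly on `[0, (M-1)/e]`.
For `x > M`, the terms of `E(x)` increase, so `E(x) ≤ M x^{M-1}/(M-1)! < x^M/(M-1)!`, and `Φ`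
decreases strictly on `[M, ∞)`.
-/

open Finset Set Nat Real

noncomputable def expTrunc (n : ℕ) (x : ℝ) : ℝ :=
  ∑ k ∈ range n, x ^ k / k !

theorem expTrunc_succ (n : ℕ) (x : ℝ) : expTrunc (n + 1) x = expTrunc n x + x ^ n / n ! :=
  sum_range_succ _ _

theorem hasDerivAt_expTrunc_succ (n : ℕ) (x : ℝ) :
    HasDerivAt (expTrunc (n + 1)) (expTrunc n x) x := by
  have h : HasDerivAt (expTrunc (n + 1)) (∑ k ∈ range (n + 1), k * x ^ (k - 1) / k !) x :=
    HasDerivAt.fun_sum fun k _ => (hasDerivAt_pow k x).div_const (k ! : ℝ)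
  refine h.congr_deriv ?_
  rw [sum_range_succ', expTrunc, Nat.cast_zero, zero_mul, zero_div, add_zero]
  refine sum_congr rfl fun k _ => ?_
  push_cast [factorial_succ, add_tsub_cancel_right]
  field_simp

theorem Phi_succ_eq (n : ℕ) (x : ℝ) : Phi (n + 1) x = exp (-x) * (x * expTrunc (n + 1) x) := by
  rw [Phi, expTrunc]
  congr 1
  rw [Finset.mul_sum, ← Finset.Ico_add_one_right_eq_Icc, Finset.sum_Ico_eq_sum_range,
    add_tsub_cancel_right]
  refine Finset.sum_congr rfl fun k _ => ?_
  rw [add_comm 1 k, add_tsub_cancel_right, pow_succ]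
  ring

theorem hasDerivAt_Phi_succ (n : ℕ) (x : ℝ) :
    HasDerivAt (Phi (n + 1)) (exp (-x) * (expTrunc (n + 1) x - x ^ (n + 1) / n !)) x := by
  have hexp : HasDerivAt (fun y : ℝ => exp (-y)) (-exp (-x)) x := by
    simpa using (hasDerivAt_neg x).exp
  have h := hexp.mul ((hasDerivAt_id x).mul (hasDerivAt_expTrunc_succ n x))
  rw [funext (Phi_succ_eq n)]
  refine h.congr_deriv ?_
  simp only [expTrunc_succ, id, Pi.mul_apply, pow_succ]
  ring

theorem pow_div_factorial_le_pow_div_factorial {x : ℝ} {k n : ℕ} (hkn : k ≤ n)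
    (hx : (n : ℝ) ≤ x) : x ^ k / k ! ≤ x ^ n / n ! := by
  induction n, hkn using Nat.le_induction with
  | base => rfl
  | succ n hkn ih =>
    have hn : (n : ℝ) + 1 ≤ x := by exact_mod_cast hx
    have hx0 : 0 ≤ x := le_trans (by positivity) hn
    calc x ^ k / k ! ≤ x ^ n / n ! := ih (by linarith)
      _ ≤ x ^ n / n ! * (x / (n + 1)) := by
          apply le_mul_of_one_le_right (by positivity)
          rwa [one_le_div (by positivity)]
      _ = x ^ (n + 1) / (n + 1)! := by
          push_cast [factorial_succ]
          field_simp
          ring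

theorem expTrunc_succ_lt {n : ℕ} {x : ℝ} (hx : (n : ℝ) + 1 < x) :
    expTrunc (n + 1) x < x ^ (n + 1) / n ! := by
  have hterm : ∀ k ∈ range (n + 1), x ^ k / k ! ≤ x ^ n / n ! := fun k hk =>
    pow_div_factorial_le_pow_div_factorial (mem_range_succ_iff.1 hk) (by linarith)
  have hpos : 0 < x ^ n / n ! := by
    have : 0 < x := lt_trans (by positivity) hx
    positivity
  calc expTrunc (n + 1) x ≤ (n + 1) * (x ^ n / n !) := by
        rw [expTrunc]
        simpa using sum_le_card_nsmul _ _ _ hterm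
    _ < x * (x ^ n / n !) := mul_lt_mul_of_pos_right hx hpos
    _ = x ^ (n + 1) / n ! := by ring

theorem pow_le_factorial_of_le_div_exp {n : ℕ} {x : ℝ} (hx₀ : 0 ≤ x) (hx : x ≤ n / exp 1) :
    x ^ n ≤ n ! := by
  have hstirling : ((n : ℝ) / exp 1) ^ n ≤ n ! := by
    rw [div_pow, ← exp_nat_mul, mul_one, div_le_iff₀ (exp_pos _), mul_comm,
      ← div_le_iff₀ (by positivity)]
    exact pow_div_factorial_le_exp _ n.cast_nonneg n
  exact (pow_le_pow_left₀ hx₀ hx n).trans hstirling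

theorem lt_expTrunc_succ {n : ℕ} {x : ℝ} (hx₀ : 0 < x) (hx : x ≤ n / exp 1) :
    x ^ (n + 1) / n ! < expTrunc (n + 1) x := by
  have hn : 1 ≤ n := by
    have : (0 : ℝ) < n := (div_pos_iff_of_pos_right (exp_pos 1)).1 (hx₀.trans_le hx)
    exact_mod_cast this
  have hle : x ^ (n + 1) / n ! ≤ x := by
    rw [pow_succ, div_le_iff₀ (by positivity), mul_comm x]
    exact mul_le_mul_of_nonneg_right (pow_le_factorial_of_le_div_exp hx₀.le hx) hx₀.le
  have hlow : 1 + x ≤ expTrunc (n + 1) x :=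
    calc 1 + x = expTrunc 2 x := by simp [expTrunc, sum_range_succ]
      _ ≤ expTrunc (n + 1) x := sum_le_sum_of_subset_of_nonneg
          (range_subset_range.2 (Nat.succ_le_succ hn)) fun k _ _ => by positivity
  linarith

theorem strictMonoOn_Phi_succ (n : ℕ) : StrictMonoOn (Phi (n + 1)) (Icc 0 (n / exp 1)) := by
  refine strictMonoOn_of_deriv_pos (convex_Icc _ _)
    (fun x _ => (hasDerivAt_Phi_succ n x).continuousAt.continuousWithinAt) fun x hx => ?_
  rw [interior_Icc] at hx
  rw [(hasDerivAt_Phi_succ n x).deriv]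
  exact mul_pos (exp_pos _) (sub_pos.2 (lt_expTrunc_succ hx.1 hx.2.le))

theorem strictAntiOn_Phi_succ (n : ℕ) : StrictAntiOn (Phi (n + 1)) (Ici ((n : ℝ) + 1)) := by
  refine strictAntiOn_of_deriv_neg (convex_Ici _)
    (fun x _ => (hasDerivAt_Phi_succ n x).continuousAt.continuousWithinAt) fun x hx => ?_
  rw [interior_Ici] at hx
  rw [(hasDerivAt_Phi_succ n x).deriv]
  exact mul_neg_of_pos_of_neg (exp_pos _) (sub_neg.2 (expTrunc_succ_lt hx))

section UnimodalOrder

variable {α β : Type*} [LinearOrder α] {f : α → β} {a b c : α}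

theorem exists_mem_Icc_le_of_monotoneOn_of_antitoneOn [Preorder β] (hca : c ≤ a) (hab : a ≤ b)
    (hmono : MonotoneOn f (Icc c a)) (hanti : AntitoneOn f (Ici b)) {x : α} (hx : c ≤ x) :
    ∃ y ∈ Icc a b, f x ≤ f y := by
  rcases le_total x a with hxa | hax
  · exact ⟨a, ⟨le_rfl, hab⟩, hmono ⟨hx, hxa⟩ ⟨hca, le_rfl⟩ hxa⟩
  rcases le_total x b with hxb | hbx
  · exact ⟨x, ⟨hax, hxb⟩, le_rfl⟩
  · exact ⟨b, ⟨hab, le_rfl⟩, hanti (mem_Ici.2 le_rfl) (mem_Ici.2 hbx) hbx⟩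

theorem mem_Icc_of_strictMonoOn_of_strictAntiOn [PartialOrder β] (hca : c ≤ a) (hcb : c ≤ b)
    (hmono : StrictMonoOn f (Icc c a)) (hanti : StrictAntiOn f (Ici b)) {x : α} (hx : c ≤ x)
    (hmax : ∀ y, c ≤ y → f y ≤ f x) : x ∈ Icc a b := by
  constructor
  · by_contra! hxa
    exact (hmax a hca).not_gt (hmono ⟨hx, hxa.le⟩ ⟨hca, le_rfl⟩ hxa)
  · by_contra! hbx
    exact (hmax b hcb).not_gt (hanti (mem_Ici.2 le_rfl) (mem_Ici.2 hbx.le) hbx)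

end UnimodalOrder

/-- for `M ≥ 1`, every value of `Φ` on `[0, ∞)` is dominated by a value of
`Φ` at some point of `[(M-1)/e, M]`; in particular every maximiser of `Φ` over `[0, ∞)`
lies in `[(M-1)/e, M]` (so a maximising `α` is `Θ(M)`). -/
theorem phi_maximiser_interval (M : ℕ) (hM : 1 ≤ M) :
    (∀ α : ℝ, 0 ≤ α → ∃ β : ℝ,
        ((M : ℝ) - 1) / Real.exp 1 ≤ β ∧ β ≤ (M : ℝ) ∧ Phi M α ≤ Phi M β) ∧
    (∀ α : ℝ, 0 ≤ α → (∀ γ : ℝ, 0 ≤ γ → Phi M γ ≤ Phi M α) →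
        ((M : ℝ) - 1) / Real.exp 1 ≤ α ∧ α ≤ (M : ℝ)) := by
  obtain ⟨n, rfl⟩ : ∃ n, M = n + 1 := ⟨M - 1, by omega⟩
  push_cast
  rw [add_sub_cancel_right]
  have h0 : (0 : ℝ) ≤ n / exp 1 := by positivity
  have hle : (n : ℝ) / exp 1 ≤ n + 1 :=
    (div_le_self n.cast_nonneg (one_le_exp zero_le_one)).trans (le_add_of_nonneg_right zero_le_one)
  refine ⟨fun α hα => ?_, fun α hα hmax => ?_⟩
  · obtain ⟨β, hβ, hΦ⟩ := exists_mem_Icc_le_of_monotoneOn_of_antitoneOn h0 hle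
      (strictMonoOn_Phi_succ n).monotoneOn (strictAntiOn_Phi_succ n).antitoneOn hα
    exact ⟨β, hβ.1, hβ.2, hΦ⟩
  · exact mem_Icc_of_strictMonoOn_of_strictAntiOn h0 (by positivity) (strictMonoOn_Phi_succ n)
      (strictAntiOn_Phi_succ n) hα hmax
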